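/- Let L be an ortholattice and X an orthospace. For an ortholattice homomorphism f : L → C(X) define f⁻ : X → F(L) by f⁻(x) = {a ∈ L : x ∈ f(a)}, and for an orthospace morphism φ : X → F(L) define φ⁺ : L → C(X) by φ⁺(a) = {x ∈ X : a ∈ φ(x)}. Then f⁻ is an orthospace morphism from X to the Goldblatt orthospace F(L), φ⁺ is an ortholattice homomorphism from L to C(X), and the assignments f ↦ f⁻ and φ ↦ φ⁺ are mutually inverse bijections between the set of ortholattice homomorphisms L → C(X) and the set of orthospace morphisms X → F(L). -/
import Mathlib


open Set

/-- The orthogonal `S^⊥` of a set with respect to an orthogonality relation. -/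
def oset {X : Type*} (perp : X → X → Prop) (S : Set X) : Set X := {y | ∀ x ∈ S, perp x y}

/-- The relational image `R[A]`. -/
def relImg {X : Type*} (R : X → X → Prop) (A : Set X) : Set X := {y | ∃ x ∈ A, R x y}

/-- `c` is an orthocomplementation on the bounded lattice `L`. -/
structure IsOrthocompl {L : Type*} [Lattice L] [BoundedOrder L] (c : L → L) : Prop where
  antitone : ∀ a b : L, a ≤ b → c b ≤ c a
  involutive : ∀ a : L, c (c a) = a
  inf_compl : ∀ a : L, a ⊓ c a = ⊥
  sup_compl : ∀ a : L, a ⊔ c a = ⊤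

/-- `E` is a quantifier on the ortholattice `(L, c)`, making it a monadic ortholattice. -/
structure IsQuantifier {L : Type*} [Lattice L] [BoundedOrder L] (c E : L → L) : Prop where
  le_exists : ∀ a : L, a ≤ E a
  mono : ∀ a b : L, a ≤ b → E a ≤ E b
  idem : ∀ a : L, E (E a) = E a
  compl_closed : ∀ a : L, c (E a) = E (c (E a))

/-- A proper filter of a bounded lattice: nonempty, upward closed, closed under
binary meets, and not containing `⊥`. -/
def IsProperFilter {L : Type*} [Lattice L] [BoundedOrder L] (x : Set L) : Prop :=
  x.Nonempty ∧ (∀ a ∈ x, ∀ b : L, a ≤ b → b ∈ x) ∧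
    (∀ a ∈ x, ∀ b ∈ x, a ⊓ b ∈ x) ∧ (⊥ : L) ∉ x

/-- The set of proper filters of `L` (the underlying set of the Goldblatt orthoframe). -/
abbrev FL (L : Type*) [Lattice L] [BoundedOrder L] := {x : Set L // IsProperFilter x}

/-- Goldblatt orthogonality: `x ⊥ y` iff some `a` has `a ∈ x` and `a′ ∈ y`. -/
def gperp {L : Type*} [Lattice L] [BoundedOrder L] (c : L → L) (x y : FL L) : Prop :=
  ∃ a : L, a ∈ x.1 ∧ c a ∈ y.1

/-- The relation `x R y` iff `∃[x] ⊆ y`, where `∃[x] = {∃a : a ∈ x}`. -/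
def gR {L : Type*} [Lattice L] [BoundedOrder L] (E : L → L) (x y : FL L) : Prop :=
  E '' x.1 ⊆ y.1

/-- `h(a) = {x ∈ F(L) : a ∈ x}`. -/
def hset {L : Type*} [Lattice L] [BoundedOrder L] (a : L) : Set (FL L) := {x | a ∈ x.1}

/-- The Goldblatt topology on `F(L)`, generated by the sets `h(a)` and their
set-theoretic complements. -/
instance goldTop (L : Type*) [Lattice L] [BoundedOrder L] : TopologicalSpace (FL L) :=
  TopologicalSpace.generateFrom ({S | ∃ a : L, S = hset a} ∪ {S | ∃ a : L, S = (hset a)ᶜ})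

/-- `C(X)`: the clopen bi-orthogonally closed subsets of `X`. -/
def COf {X : Type*} [TopologicalSpace X] (perp : X → X → Prop) : Set (Set X) :=
  {U | IsClopen U ∧ oset perp (oset perp U) = U}

/-- `(X, perp, ≤, τ)` is an orthospace: a compact space with an irreflexive symmetric
relation `perp` and a partial order satisfying conditions (1)-(4). -/
structure IsOrthospace (X : Type*) [TopologicalSpace X] [PartialOrder X]
    (perp : X → X → Prop) : Prop where
  compact : CompactSpace X
  irrefl : ∀ x : X, ¬ perp x x
  symm : ∀ x y : X, perp x y → perp y x
  sep : ∀ x y : X, ¬ x ≤ y → ∃ U ∈ COf perp, x ∈ U ∧ y ∉ U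
  up_perp : ∀ x y z : X, perp x z → x ≤ y → perp y z
  perp_mem : ∀ U ∈ COf perp, oset perp U ∈ COf perp
  sep_perp : ∀ x y : X, perp x y → ∃ U ∈ COf perp, x ∈ U ∧ y ∈ oset perp U

/-- An orthospace morphism: continuous, reflects orthogonality, and satisfies the
back condition. -/
def IsOSMor {X Y : Type*} [TopologicalSpace X] [TopologicalSpace Y]
    (perpX : X → X → Prop) (perpY : Y → Y → Prop) (φ : X → Y) : Prop :=
  Continuous φ ∧ (∀ p q : X, perpY (φ p) (φ q) → perpX p q) ∧
    ∀ (x : Y) (p : X), ¬ perpY x (φ p) →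
      ∃ q : X, ¬ perpX q p ∧ φ q ∈ oset perpY (oset perpY ({x} : Set Y))

/-- An ortholattice homomorphism from `L` into the ortholattice `C(X)` of clopen
bi-orthogonally closed subsets of `X` (with meet `∩`, join `(U ∪ V)^⊥⊥`,
orthocomplement `U^⊥`, bounds `∅` and `X`). -/
def IsOLHomC {L X : Type*} [Lattice L] [BoundedOrder L] [TopologicalSpace X]
    (c : L → L) (perp : X → X → Prop) (f : L → Set X) : Prop :=
  (∀ a : L, f a ∈ COf perp) ∧
  (∀ a b : L, f (a ⊓ b) = f a ∩ f b) ∧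
  (∀ a b : L, f (a ⊔ b) = oset perp (oset perp (f a ∪ f b))) ∧
  f ⊥ = (∅ : Set X) ∧ f ⊤ = (Set.univ : Set X) ∧
  ∀ a : L, f (c a) = oset perp (f a)


section AuxOset

variable {X : Type*} {perp : X → X → Prop}

lemma oset_anti {S T : Set X} (h : S ⊆ T) : oset perp T ⊆ oset perp S :=
  fun y hy x hx => hy x (h hx)

lemma subset_oset_oset (hs : ∀ x y : X, perp x y → perp y x) (S : Set X) :
    S ⊆ oset perp (oset perp S) := fun x hx z hz => hs x z (hz x hx)

lemma oset_oset_oset (hs : ∀ x y : X, perp x y → perp y x) (S : Set X) :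
    oset perp (oset perp (oset perp S)) = oset perp S :=
  Set.Subset.antisymm (oset_anti (subset_oset_oset hs S)) (subset_oset_oset hs _)

lemma oset_union (S T : Set X) :
    oset perp (S ∪ T) = oset perp S ∩ oset perp T := by
  ext y
  constructor
  · exact fun h => ⟨fun x hx => h x (Or.inl hx), fun x hx => h x (Or.inr hx)⟩
  · rintro ⟨h1, h2⟩ x (hx | hx)
    exacts [h1 x hx, h2 x hx]

end AuxOset

section AuxOL

variable {L : Type*} [Lattice L] [BoundedOrder L] {c : L → L}

lemma aux_c_bot (hc : IsOrthocompl c) : c (⊥ : L) = ⊤ := by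
  have := hc.sup_compl (⊥ : L); simpa using this

lemma aux_c_top (hc : IsOrthocompl c) : c (⊤ : L) = ⊥ := by
  have := hc.involutive (⊥ : L); rw [aux_c_bot hc] at this; exact this

lemma aux_sup_eq (hc : IsOrthocompl c) (a b : L) : a ⊔ b = c (c a ⊓ c b) := by
  apply le_antisymm
  · apply sup_le
    · have := hc.antitone _ _ (inf_le_left : c a ⊓ c b ≤ c a)
      rwa [hc.involutive] at this
    · have := hc.antitone _ _ (inf_le_right : c a ⊓ c b ≤ c b)
      rwa [hc.involutive] at this
  · have h1 : c (a ⊔ b) ≤ c a := hc.antitone _ _ le_sup_left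
    have h2 : c (a ⊔ b) ≤ c b := hc.antitone _ _ le_sup_right
    have := hc.antitone _ _ (le_inf h1 h2)
    rwa [hc.involutive] at this

lemma aux_top_mem (x : FL L) : (⊤ : L) ∈ x.1 := by
  obtain ⟨a, ha⟩ := x.2.1
  exact x.2.2.1 a ha ⊤ le_top

lemma aux_principal_proper {a : L} (ha : a ≠ ⊥) : IsProperFilter {b : L | a ≤ b} :=
  ⟨⟨a, le_refl a⟩, fun b hb d hd => le_trans hb hd, fun b hb d hd => le_inf hb hd,
    fun h => ha (le_bot_iff.mp h)⟩

lemma aux_up_mem_bioset (hc : IsOrthocompl c) (x z : FL L) (hz : x.1 ⊆ z.1) :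
    z ∈ oset (gperp c) (oset (gperp c) ({x} : Set (FL L))) := by
  intro y hy
  obtain ⟨a, ha, hca⟩ := hy x rfl
  exact ⟨c a, hca, by rw [hc.involutive]; exact hz ha⟩

lemma aux_hset_clopen (a : L) : IsClopen (hset a) := by
  constructor
  · rw [← isOpen_compl_iff]
    exact TopologicalSpace.isOpen_generateFrom_of_mem (Or.inr ⟨a, rfl⟩)
  · exact TopologicalSpace.isOpen_generateFrom_of_mem (Or.inl ⟨a, rfl⟩)

end AuxOL

lemma aux_perp_open {X : Type*} [TopologicalSpace X] [PartialOrder X]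
    {perp : X → X → Prop} (hX : IsOrthospace X perp) (p : X) :
    IsOpen {q : X | perp q p} := by
  have he : {q : X | perp q p} = ⋃ U ∈ {U : Set X | U ∈ COf perp ∧ p ∈ oset perp U}, U := by
    ext q
    simp only [Set.mem_iUnion, Set.mem_setOf_eq]
    constructor
    · intro h
      obtain ⟨U, hU, hq, hp⟩ := hX.sep_perp q p h
      exact ⟨U, ⟨hU, hp⟩, hq⟩
    · rintro ⟨U, ⟨hU, hp⟩, hq⟩
      exact hp q hq
  rw [he]
  exact isOpen_biUnion fun U hU => hU.1.1.2

/-- For an ortholattice `L` and an orthospace `X`: `f ↦ f⁻` with `f⁻(x) = {a : x ∈ f(a)}`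
and `φ ↦ φ⁺` with `φ⁺(a) = {x : a ∈ φ(x)}` are mutually inverse bijections between
ortholattice homomorphisms `L → C(X)` and orthospace morphisms `X → F(L)`. -/
theorem stmt12 {L X : Type*} [Lattice L] [BoundedOrder L]
    [TopologicalSpace X] [PartialOrder X] (c : L → L) (perp : X → X → Prop)
    (hc : IsOrthocompl c) (hX : IsOrthospace X perp) :
    (∀ f : L → Set X, IsOLHomC c perp f →
      ∃ ψ : X → FL L, (∀ x : X, (ψ x).1 = {a : L | x ∈ f a}) ∧
        IsOSMor perp (gperp c) ψ ∧ ∀ a : L, {x : X | a ∈ (ψ x).1} = f a) ∧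
    (∀ φ : X → FL L, IsOSMor perp (gperp c) φ →
      IsOLHomC c perp (fun a : L => {x : X | a ∈ (φ x).1}) ∧
        ∀ x : X, {a : L | x ∈ {x' : X | a ∈ (φ x').1}} = (φ x).1) := by
  have gperp_symm : ∀ x y : FL L, gperp c x y → gperp c y x := by
    rintro x y ⟨a, hax, hay⟩
    exact ⟨c a, hay, by rw [hc.involutive]; exact hax⟩
  constructor
  · -- Part 1
    intro f hf
    obtain ⟨hfC, hfinf, hfsup, hfbot, hftop, hfc⟩ := hf
    have hfmono : ∀ a b : L, a ≤ b → f a ⊆ f b := by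
      intro a b hab
      have h1 : a ⊓ b = a := inf_eq_left.mpr hab
      have h2 : f a = f a ∩ f b := by rw [← hfinf, h1]
      rw [h2]; exact Set.inter_subset_right
    have hfilt : ∀ x : X, IsProperFilter {a : L | x ∈ f a} := by
      intro x
      refine ⟨⟨⊤, ?_⟩, ?_, ?_, ?_⟩
      · show x ∈ f ⊤; rw [hftop]; trivial
      · intro a ha b hab
        exact hfmono a b hab ha
      · intro a ha b hb
        show x ∈ f (a ⊓ b); rw [hfinf]; exact ⟨ha, hb⟩
      · show x ∉ f ⊥; rw [hfbot]; exact notMem_empty x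
    refine ⟨fun x => ⟨{a : L | x ∈ f a}, hfilt x⟩, fun x => rfl, ⟨?_, ?_, ?_⟩, fun a => rfl⟩
    · -- continuity
      apply continuous_generateFrom_iff.mpr
      rintro S (⟨a, rfl⟩ | ⟨a, rfl⟩)
      · have : (fun x => (⟨{a : L | x ∈ f a}, hfilt x⟩ : FL L)) ⁻¹' hset a = f a := rfl
        rw [this]; exact (hfC a).1.2
      · have : (fun x => (⟨{a : L | x ∈ f a}, hfilt x⟩ : FL L)) ⁻¹' (hset a)ᶜ = (f a)ᶜ := rfl
        rw [this]; exact (hfC a).1.1.isOpen_compl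
    · -- reflects orthogonality
      rintro p q ⟨a, hp, hq⟩
      have hq' : q ∈ oset perp (f a) := by
        have : q ∈ f (c a) := hq
        rwa [hfc a] at this
      exact hq' p hp
    · -- back condition
      intro x p hnp
      haveI := hX.compact
      haveI : Nonempty {a : L // a ∈ x.1} := ⟨⟨x.2.1.choose, x.2.1.choose_spec⟩⟩
      have hex : ∀ a ∈ x.1, ∃ q ∈ f a, ¬ perp q p := by
        intro a ha
        have h1 : p ∉ f (c a) := fun hp => hnp ⟨a, ha, hp⟩
        rw [hfc a] at h1
        by_contra hcon
        push_neg at hcon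
        exact h1 fun y hy => hcon y hy
      set N : Set X := {q : X | perp q p}ᶜ with hN
      have hNcl : IsClosed N := (aux_perp_open hX p).isClosed_compl
      set Z : {a : L // a ∈ x.1} → Set X := fun a => f a.1 ∩ N with hZ
      have hZcl : ∀ a, IsClosed (Z a) := fun a => ((hfC a.1).1.1).inter hNcl
      have hZn : ∀ a, (Z a).Nonempty := by
        intro a
        obtain ⟨q, hq1, hq2⟩ := hex a.1 a.2
        exact ⟨q, hq1, hq2⟩
      have hZd : Directed (· ⊇ ·) Z := by
        intro a b
        refine ⟨⟨a.1 ⊓ b.1, x.2.2.2.1 a.1 a.2 b.1 b.2⟩, ?_, ?_⟩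
        · intro q hq
          exact ⟨(hfmono _ _ inf_le_left) hq.1, hq.2⟩
        · intro q hq
          exact ⟨(hfmono _ _ inf_le_right) hq.1, hq.2⟩
      obtain ⟨q, hq⟩ := IsCompact.nonempty_iInter_of_directed_nonempty_isCompact_isClosed
        Z hZd hZn (fun a => (hZcl a).isCompact) hZcl
      simp only [Set.mem_iInter] at hq
      have hqN : ¬ perp q p := (hq (Classical.arbitrary _)).2
      have hsub : x.1 ⊆ {a : L | q ∈ f a} := fun a ha => (hq ⟨a, ha⟩).1
      exact ⟨q, hqN, aux_up_mem_bioset hc x _ hsub⟩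
  · -- Part 2
    intro φ hφ
    obtain ⟨hφc, hφr, hφb⟩ := hφ
    set g : L → Set X := fun a => {x : X | a ∈ (φ x).1} with hg
    have hgtop : g ⊤ = Set.univ := by
      ext x; simp only [hg, Set.mem_setOf_eq, Set.mem_univ, iff_true]
      exact aux_top_mem (φ x)
    have hgbot : g ⊥ = (∅ : Set X) := by
      ext x; simp only [hg, Set.mem_setOf_eq, Set.mem_empty_iff_false, iff_false]
      exact (φ x).2.2.2.2
    have hginf : ∀ a b : L, g (a ⊓ b) = g a ∩ g b := by
      intro a b
      ext x
      constructor
      · intro h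
        exact ⟨(φ x).2.2.1 _ h a inf_le_left, (φ x).2.2.1 _ h b inf_le_right⟩
      · rintro ⟨h1, h2⟩
        exact (φ x).2.2.2.1 a h1 b h2
    have hkey : ∀ a : L, g (c a) = oset perp (g a) := by
      intro a
      ext x
      constructor
      · intro hca y hy
        exact hφr y x ⟨a, hy, hca⟩
      · intro hx
        by_contra hca
        by_cases hab : a = ⊥
        · subst hab
          rw [aux_c_bot hc] at hca
          exact hca (aux_top_mem (φ x))
        · set pf : FL L := ⟨{b : L | a ≤ b}, aux_principal_proper hab⟩ with hpf
          have hng : ¬ gperp c pf (φ x) := by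
            rintro ⟨b, hb, hcb⟩
            exact hca ((φ x).2.2.1 (c b) hcb (c a) (hc.antitone a b hb))
          obtain ⟨q, hq, hφq⟩ := hφb pf x hng
          have haq : a ∈ (φ q).1 := by
            by_contra haq
            have hcab : c a ≠ ⊥ := by
              intro h
              have : a = ⊤ := by
                have := hc.involutive a
                rw [h, aux_c_bot hc] at this
                exact this.symm
              exact haq (this ▸ aux_top_mem (φ q))
            set z : FL L := ⟨{b : L | c a ≤ b}, aux_principal_proper hcab⟩ with hz
            have hzmem : z ∈ oset (gperp c) ({pf} : Set (FL L)) := by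
              intro w hw
              rw [Set.mem_singleton_iff] at hw
              subst hw
              exact ⟨a, le_refl a, le_refl (c a)⟩
            obtain ⟨b, hb, hcb⟩ := hφq z hzmem
            have : c b ≤ a := by
              have := hc.antitone _ _ (hb : c a ≤ b)
              rwa [hc.involutive] at this
            exact haq ((φ q).2.2.1 (c b) hcb a this)
          exact hq (hx q haq)
    have hbi : ∀ a : L, oset perp (oset perp (g a)) = g a := by
      intro a
      have e1 : g a = oset perp (g (c a)) := by
        have := hkey (c a)
        rw [hc.involutive] at this
        exact this
      rw [e1, ← hkey (c a), hkey, oset_oset_oset hX.symm]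
    have hgC : ∀ a : L, g a ∈ COf perp := by
      intro a
      refine ⟨?_, hbi a⟩
      have : g a = φ ⁻¹' hset a := rfl
      rw [this]
      exact (aux_hset_clopen a).preimage hφc
    refine ⟨⟨hgC, hginf, ?_, hgbot, hgtop, hkey⟩, fun x => rfl⟩
    intro a b
    rw [aux_sup_eq hc a b, hkey, hginf, hkey, hkey, ← oset_union]
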